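/- arXiv:2307.10657 — 6 statements merged into one kernel-verified Lean document; each statement's English description precedes it below -/
import Mathlib

section
/- With H_L > 0 fixed, H_R = H_L/ν² for ν > 1, c = (ν² + ν + 1)√(H_R)/(ν+1), q₀ = ν² H_R^{3/2}/(ν+1), and H_s = (q₀F)^{2/3}, the condition H_R < H_s < H_L holds if and only if (ν+1)/ν² < F < ν(ν+1). -/
/-! Raising everything to the power `3/2` turns `H_R < H_s < H_L = ν² H_R` into
`H_R^{3/2} < q₀ F < ν³ H_R^{3/2}`; since `q₀ = ν² H_R^{3/2} / (ν + 1)`, the common positive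
factor `H_R^{3/2}` cancels and leaves `(ν + 1)/ν² < F < ν(ν + 1)`. -/

namespace Real

lemma lt_rpow_two_thirds_iff {x y : ℝ} (hx : 0 ≤ x) (hy : 0 ≤ y) :
    x < y ^ ((2 : ℝ) / 3) ↔ x ^ ((3 : ℝ) / 2) < y := by
  rw [show (2 : ℝ) / 3 = ((3 : ℝ) / 2)⁻¹ by norm_num]
  exact lt_rpow_inv_iff_of_pos hx hy (by norm_num)

lemma rpow_two_thirds_lt_iff {x y : ℝ} (hx : 0 ≤ x) (hy : 0 ≤ y) :
    x ^ ((2 : ℝ) / 3) < y ↔ x < y ^ ((3 : ℝ) / 2) := by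
  rw [show (2 : ℝ) / 3 = ((3 : ℝ) / 2)⁻¹ by norm_num]
  exact rpow_inv_lt_iff_of_pos hx hy (by norm_num)

lemma sq_mul_rpow_three_halves {a x : ℝ} (ha : 0 ≤ a) (hx : 0 ≤ x) :
    (a ^ 2 * x) ^ ((3 : ℝ) / 2) = a ^ 3 * x ^ ((3 : ℝ) / 2) := by
  rw [mul_rpow (by positivity) hx, ← rpow_natCast_mul ha]
  norm_num

end Real

lemma lt_sq_mul_div_mul_and_lt_cube_mul_iff {A ν F : ℝ} (hA : 0 < A) (hν : 0 < ν) :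
    (A < ν ^ 2 * A / (ν + 1) * F ∧ ν ^ 2 * A / (ν + 1) * F < ν ^ 3 * A) ↔
      ((ν + 1) / ν ^ 2 < F ∧ F < ν * (ν + 1)) := by
  have hν1 : 0 < ν + 1 := by linarith
  have hν2 : 0 < ν ^ 2 := by positivity
  rw [div_lt_iff₀ hν2, div_mul_eq_mul_div, lt_div_iff₀ hν1, div_lt_iff₀ hν1]
  refine and_congr ⟨fun h => ?_, fun h => ?_⟩ ⟨fun h => ?_, fun h => ?_⟩
  · nlinarith
  · nlinarith
  · nlinarith [mul_pos hA hν2]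
  · nlinarith [mul_pos hA hν2]

theorem lax_conditions_iff_general (H_L H_R ν q₀ F H_s : ℝ)
    (hL : 0 < H_L) (hν : 1 < ν) (hF : 0 < F)
    (hR : H_R = H_L / ν ^ 2)
    (hq : q₀ = ν ^ 2 * H_R ^ ((3 : ℝ) / 2) / (ν + 1))
    (hs : H_s = (q₀ * F) ^ ((2 : ℝ) / 3)) :
    (H_R < H_s ∧ H_s < H_L) ↔ ((ν + 1) / ν ^ 2 < F ∧ F < ν * (ν + 1)) := by
  have hν₀ : 0 < ν := by linarith
  have hR₀ : 0 < H_R := by rw [hR]; positivity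
  have hLR : H_L = ν ^ 2 * H_R := by rw [hR]; field_simp
  have hq₀F : 0 ≤ q₀ * F := by rw [hq]; positivity
  rw [hs, hLR, Real.lt_rpow_two_thirds_iff hR₀.le hq₀F,
    Real.rpow_two_thirds_lt_iff hq₀F (by positivity),
    Real.sq_mul_rpow_three_halves hν₀.le hR₀.le, hq]
  exact lt_sq_mul_div_mul_and_lt_cube_mul_iff (by positivity) hν₀

theorem lax_conditions_iff (H_L H_R ν c q₀ F H_s : ℝ)
    (hL : 0 < H_L) (hν : 1 < ν) (hF : 0 < F)
    (hR : H_R = H_L / ν ^ 2)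
    (hc : c = (ν ^ 2 + ν + 1) * Real.sqrt H_R / (ν + 1))
    (hq : q₀ = ν ^ 2 * H_R ^ ((3 : ℝ) / 2) / (ν + 1))
    (hs : H_s = (q₀ * F) ^ ((2 : ℝ) / 3)) :
    (H_R < H_s ∧ H_s < H_L) ↔ ((ν + 1) / ν ^ 2 < F ∧ F < ν * (ν + 1)) :=
  lax_conditions_iff_general H_L H_R ν q₀ F H_s hL hν hF hR hq hs
end

section
/- Under the scaling H_L = ν² H_R with ν > 1 and H_* = ((−(ν+1) + √(8F²ν⁴ + ν² + 2ν + 1))/(2(ν+1))) H_R, the inequality H_* < H_L holds if and only if F < ((ν+1)√(2(ν²+1)))/(2ν), the equality H_* = H_L holds if and only if F = ((ν+1)√(2(ν²+1)))/(2ν), and H_* > H_L holds if and only if F > ((ν+1)√(2(ν²+1)))/(2ν). -/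
/-!
For fixed `ν` and `H_R`, `H_*` is a strictly increasing function of `F ≥ 0`, and at the critical
value `F₀ = (ν + 1) √(2(ν² + 1)) / (2ν)` the radicand is the perfect square `((ν + 1)(2ν² + 1))²`,
so that `H_* = ν² H_R = H_L` there. The three cases are then the trichotomy `F < F₀`, `F = F₀`,
`F > F₀` transported along a strictly monotone map.
-/

open Set Real

theorem StrictMonoOn.lt_iff_lt_and_eq_iff_eq_and_lt_iff_lt {α β : Type*} [LinearOrder α]
    [Preorder β] {f : α → β} {s : Set α} (hf : StrictMonoOn f s) {a b : α} (ha : a ∈ s)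
    (hb : b ∈ s) :
    (f a < f b ↔ a < b) ∧ (f a = f b ↔ a = b) ∧ (f b < f a ↔ b < a) :=
  ⟨hf.lt_iff_lt ha hb, hf.injOn.eq_iff ha hb, hf.lt_iff_lt hb ha⟩

noncomputable def leftShockDepth (ν H_R F : ℝ) : ℝ :=
  ((-(ν + 1) + √(8 * F ^ 2 * ν ^ 4 + ν ^ 2 + 2 * ν + 1)) / (2 * (ν + 1))) * H_R

noncomputable def criticalFroude (ν : ℝ) : ℝ :=
  ((ν + 1) * √(2 * (ν ^ 2 + 1))) / (2 * ν)

lemma criticalFroude_pos {ν : ℝ} (hν : 0 < ν) : 0 < criticalFroude ν := by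
  unfold criticalFroude
  have : 0 < √(2 * (ν ^ 2 + 1)) := sqrt_pos.mpr (by positivity)
  positivity

lemma strictMonoOn_leftShockDepth {ν H_R : ℝ} (hν : 0 < ν) (hR : 0 < H_R) :
    StrictMonoOn (leftShockDepth ν H_R) (Ici 0) := by
  intro x hx y _ hxy
  have hx : 0 ≤ x := hx
  unfold leftShockDepth
  gcongr

lemma leftShockDepth_criticalFroude {ν : ℝ} (hν : 0 < ν) (H_R : ℝ) :
    leftShockDepth ν H_R (criticalFroude ν) = ν ^ 2 * H_R := by
  have hradicand : 8 * criticalFroude ν ^ 2 * ν ^ 4 + ν ^ 2 + 2 * ν + 1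
      = ((ν + 1) * (2 * ν ^ 2 + 1)) ^ 2 := by
    rw [criticalFroude, div_pow, mul_pow, sq_sqrt (by positivity)]
    field_simp
    ring
  rw [leftShockDepth, hradicand, sqrt_sq (by positivity)]
  field_simp
  ring

theorem Hstar_vs_HL (H_L H_R ν F H_star : ℝ)
    (hR : 0 < H_R) (hν : 1 < ν) (hF : 0 < F)
    (hL : H_L = ν ^ 2 * H_R)
    (hstar : H_star =
      ((-(ν + 1) + Real.sqrt (8 * F ^ 2 * ν ^ 4 + ν ^ 2 + 2 * ν + 1)) / (2 * (ν + 1))) * H_R) :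
    (H_star < H_L ↔ F < ((ν + 1) * Real.sqrt (2 * (ν ^ 2 + 1))) / (2 * ν)) ∧
    (H_star = H_L ↔ F = ((ν + 1) * Real.sqrt (2 * (ν ^ 2 + 1))) / (2 * ν)) ∧
    (H_L < H_star ↔ ((ν + 1) * Real.sqrt (2 * (ν ^ 2 + 1))) / (2 * ν) < F) := by
  have hν₀ : 0 < ν := by linarith
  have hstar' : H_star = leftShockDepth ν H_R F := hstar
  have hL' : H_L = leftShockDepth ν H_R (criticalFroude ν) := by
    rw [hL, leftShockDepth_criticalFroude hν₀]
  rw [hstar', hL']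
  exact (strictMonoOn_leftShockDepth hν₀ hR).lt_iff_lt_and_eq_iff_eq_and_lt_iff_lt
    (mem_Ici.mpr hF.le) (mem_Ici.mpr (criticalFroude_pos hν₀).le)
end

section
/- For any positive reals α, γ and real β, one has inf over y ∈ ℝ of Re(√(−y²α + iyβ + γ)) = min(√γ, |β|/(2√α)) and sup over y ∈ ℝ of Re(√(−y²α + iyβ + γ)) = max(√γ, |β|/(2√α)), where √ denotes the principal square root. -/
/-!
Write `√z = a + bi` with `a ≥ 0`, so that `z.re = a² - b²` and `z.im = 2ab`. Then
`s² - z.re s - z.im²/4 = (s - a²)(s + b²)`, so `a²` is the largest root of this quadratic in `s`,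
and comparing `a²` with `s ≥ 0` amounts to evaluating its sign. For `z = γ - αy² + iβy` the sign
is read off from `s(s - γ) + y²(αs - β²/4)`, which is nonpositive at `s = min γ (β²/(4α))` and
nonnegative at `s = max γ (β²/(4α))` for every `y`. The value `√γ` is attained at `y = 0`, and
dividing the equation for `a²` by `y²` shows `a² → β²/(4α)` as `y → ∞`.
-/

open Filter Topology

namespace Complex

theorem sq_sub_re_mul_sub_im_sq_div_four (z : ℂ) (s : ℝ) :
    s ^ 2 - z.re * s - z.im ^ 2 / 4 = (s - z.sqrt.re ^ 2) * (s + z.sqrt.im ^ 2) := by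
  have hsq : z.sqrt ^ 2 = z := cpow_ofNat_inv_pow z 2
  conv_lhs => rw [← hsq]
  simp only [sq, mul_re, mul_im]
  ring

theorem re_sqrt_nonneg (z : ℂ) : 0 ≤ z.sqrt.re := by
  rw [sqrt, cpow_inv_two_re]
  exact Real.sqrt_nonneg _

theorem le_sq_re_sqrt {z : ℂ} {s : ℝ} (hs : 0 ≤ s) (h : s ^ 2 - z.re * s ≤ z.im ^ 2 / 4) :
    s ≤ z.sqrt.re ^ 2 := by
  rcases hs.eq_or_lt with rfl | hs
  · positivity
  have hneg : (s - z.sqrt.re ^ 2) * (s + z.sqrt.im ^ 2) ≤ 0 := by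
    rw [← sq_sub_re_mul_sub_im_sq_div_four]
    linarith
  exact sub_nonpos.1 (nonpos_of_mul_nonpos_left hneg (by positivity))

theorem sq_re_sqrt_le {z : ℂ} {s : ℝ} (hs : 0 < s) (h : z.im ^ 2 / 4 ≤ s ^ 2 - z.re * s) :
    z.sqrt.re ^ 2 ≤ s := by
  have hpos : 0 ≤ (s - z.sqrt.re ^ 2) * (s + z.sqrt.im ^ 2) := by
    rw [← sq_sub_re_mul_sub_im_sq_div_four]
    linarith
  exact sub_nonneg.1 (nonneg_of_mul_nonneg_left hpos (by positivity))

theorem sq_sq_re_sqrt_sub_re_mul (z : ℂ) :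
    (z.sqrt.re ^ 2) ^ 2 - z.re * z.sqrt.re ^ 2 = z.im ^ 2 / 4 := by
  have h := sq_sub_re_mul_sub_im_sq_div_four z (z.sqrt.re ^ 2)
  rw [sub_self, zero_mul] at h
  linarith

end Complex

section

variable {ι R : Type*} [ConditionallyCompleteLinearOrder R] [TopologicalSpace R]
  [OrderClosedTopology R] {f : ι → R} {l : Filter ι} [l.NeBot] {a : R}

theorem ciInf_eq_min_of_tendsto (i₀ : ι) (hf : ∀ i, min (f i₀) a ≤ f i)
    (ha : Tendsto f l (𝓝 a)) : ⨅ i, f i = min (f i₀) a := by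
  have : Nonempty ι := ⟨i₀⟩
  have hbdd : BddBelow (Set.range f) := ⟨_, Set.forall_mem_range.2 hf⟩
  exact le_antisymm (le_min (ciInf_le hbdd i₀) (ge_of_tendsto' ha (ciInf_le hbdd))) (le_ciInf hf)

theorem ciSup_eq_max_of_tendsto (i₀ : ι) (hf : ∀ i, f i ≤ max (f i₀) a)
    (ha : Tendsto f l (𝓝 a)) : ⨆ i, f i = max (f i₀) a := by
  have : Nonempty ι := ⟨i₀⟩
  have hbdd : BddAbove (Set.range f) := ⟨_, Set.forall_mem_range.2 hf⟩
  exact le_antisymm (ciSup_le hf) (max_le (le_ciSup hbdd i₀) (le_of_tendsto' ha (le_ciSup hbdd)))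

end

def fourierSymbol (α β γ y : ℝ) : ℂ := -(y ^ 2 * α) + y * β * Complex.I + γ

section

variable {α β γ : ℝ}

@[simp]
theorem fourierSymbol_re (y : ℝ) : (fourierSymbol α β γ y).re = γ - y ^ 2 * α := by
  simp [fourierSymbol, ← Complex.ofReal_pow]
  ring

@[simp]
theorem fourierSymbol_im (y : ℝ) : (fourierSymbol α β γ y).im = y * β := by
  simp [fourierSymbol, ← Complex.ofReal_pow]

theorem min_le_sq_re_sqrt_fourierSymbol (hα : 0 < α) (hγ : 0 ≤ γ) (y : ℝ) :
    min γ (β ^ 2 / (4 * α)) ≤ (fourierSymbol α β γ y).sqrt.re ^ 2 := by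
  set m := min γ (β ^ 2 / (4 * α))
  have hm : 0 ≤ m := le_min hγ (by positivity)
  have hmγ : m ≤ γ := min_le_left _ _
  have hmα : 4 * α * m ≤ β ^ 2 := (le_div_iff₀' (by positivity)).1 (min_le_right _ _)
  refine Complex.le_sq_re_sqrt hm ?_
  simp only [fourierSymbol_re, fourierSymbol_im]
  nlinarith [mul_nonneg hm (sub_nonneg.2 hmγ),
    mul_nonneg (sq_nonneg y) (sub_nonneg.2 hmα)]

theorem sq_re_sqrt_fourierSymbol_le_max (hα : 0 < α) (hγ : 0 < γ) (y : ℝ) :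
    (fourierSymbol α β γ y).sqrt.re ^ 2 ≤ max γ (β ^ 2 / (4 * α)) := by
  set M := max γ (β ^ 2 / (4 * α))
  have hγM : γ ≤ M := le_max_left _ _
  have hαM : β ^ 2 ≤ 4 * α * M := (div_le_iff₀' (by positivity)).1 (le_max_right _ _)
  refine Complex.sq_re_sqrt_le (hγ.trans_le hγM) ?_
  simp only [fourierSymbol_re, fourierSymbol_im]
  nlinarith [mul_nonneg (hγ.le.trans hγM) (sub_nonneg.2 hγM),
    mul_nonneg (sq_nonneg y) (sub_nonneg.2 hαM)]

theorem tendsto_sq_re_sqrt_fourierSymbol (hα : 0 < α) (hγ : 0 < γ) :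
    Tendsto (fun y ↦ (fourierSymbol α β γ y).sqrt.re ^ 2) atTop (𝓝 (β ^ 2 / (4 * α))) := by
  set t := fun y ↦ (fourierSymbol α β γ y).sqrt.re ^ 2
  set M := max γ (β ^ 2 / (4 * α))
  have hbdd : IsBoundedUnder (· ≤ ·) atTop (fun y ↦ ‖t y * (t y - γ)‖) := by
    refine isBoundedUnder_of ⟨M ^ 2, fun y ↦ ?_⟩
    have h0 : 0 ≤ t y := sq_nonneg _
    have hM := sq_re_sqrt_fourierSymbol_le_max hα hγ (β := β) y
    have hγM : γ ≤ M := le_max_left _ _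
    rw [Real.norm_eq_abs, abs_le]
    constructor <;> nlinarith
  have hsmall : Tendsto (fun y ↦ (y ^ 2)⁻¹ * (t y * (t y - γ))) atTop (𝓝 0) :=
    (tendsto_inv_atTop_zero.comp (tendsto_pow_atTop two_ne_zero)).zero_mul_isBoundedUnder_le hbdd
  have heq : ∀ᶠ y in atTop, β ^ 2 / (4 * α) - (y ^ 2)⁻¹ * (t y * (t y - γ)) / α = t y := by
    filter_upwards [eventually_ne_atTop 0] with y hy
    have h := Complex.sq_sq_re_sqrt_sub_re_mul (fourierSymbol α β γ y)
    simp only [fourierSymbol_re, fourierSymbol_im] at h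
    field_simp
    linear_combination (-4) * h
  simpa using (tendsto_const_nhds.sub (hsmall.div_const α)).congr' heq

end

theorem inf_sup_re_sqrt (α γ β : ℝ) (hα : 0 < α) (hγ : 0 < γ) :
    (⨅ y : ℝ, ((-(y ^ 2 * α) + y * β * Complex.I + γ : ℂ) ^ ((1 : ℂ) / 2)).re)
      = min (Real.sqrt γ) (|β| / (2 * Real.sqrt α)) ∧
    (⨆ y : ℝ, ((-(y ^ 2 * α) + y * β * Complex.I + γ : ℂ) ^ ((1 : ℂ) / 2)).re)
      = max (Real.sqrt γ) (|β| / (2 * Real.sqrt α)) := by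
  have hK : √(β ^ 2 / (4 * α)) = |β| / (2 * √α) := by
    rw [Real.sqrt_div' _ (by positivity), Real.sqrt_sq_eq_abs, Real.sqrt_mul' _ hα.le,
      show (4 : ℝ) = 2 ^ 2 by norm_num, Real.sqrt_sq zero_le_two]
  have hre (y : ℝ) : (fourierSymbol α β γ y).sqrt.re = √((fourierSymbol α β γ y).sqrt.re ^ 2) :=
    (Real.sqrt_sq (Complex.re_sqrt_nonneg _)).symm
  have h0 : (fourierSymbol α β γ 0).sqrt.re = √γ := by
    simpa [fourierSymbol] using Complex.re_sqrt_ofReal (a := γ)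
  have hlim : Tendsto (fun y ↦ (fourierSymbol α β γ y).sqrt.re) atTop (𝓝 (|β| / (2 * √α))) := by
    rw [← hK, funext hre]
    exact (tendsto_sq_re_sqrt_fourierSymbol hα hγ).sqrt
  have hlow (y : ℝ) : min √γ (|β| / (2 * √α)) ≤ (fourierSymbol α β γ y).sqrt.re := by
    rw [← hK, ← Real.sqrt_monotone.map_min, hre]
    exact Real.sqrt_le_sqrt (min_le_sq_re_sqrt_fourierSymbol hα hγ.le y)
  have hhigh (y : ℝ) : (fourierSymbol α β γ y).sqrt.re ≤ max √γ (|β| / (2 * √α)) := by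
    rw [← hK, ← Real.sqrt_monotone.map_max, hre]
    exact Real.sqrt_le_sqrt (sq_re_sqrt_fourierSymbol_le_max hα hγ y)
  simp only [one_div]
  rw [← h0] at hlow hhigh ⊢
  exact ⟨ciInf_eq_min_of_tendsto 0 hlow hlim, ciSup_eq_max_of_tendsto 0 hhigh hlim⟩
end

section
/- Let ν > 1, H_R > 0, h ∈ {H_L, H_R} with H_L = ν²H_R, c = (ν²+ν+1)√(H_R)/(ν+1), q₀ = ν²H_R^{3/2}/(ν+1). Then c − √h − 2√h/F² equals √(H_R)·ν(ν²/(ν+1) − 2/F²) when h = H_R, and equals √(H_L)(1/(ν(ν+1)) − 2/F²) when h = H_L. In particular, for h = H_L, the inequality c − √(H_L) > 2√(H_L)/F² holds if and only if F² > 2ν(ν+1). -/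
/-! At both endstates the relative speed `c - √h` is a fixed multiple `a · √h`, namely
`a = ν² / (ν + 1)` at `H_R` and, since `√H_L = ν √H_R`, `a = 1 / (ν (ν + 1))` at `H_L`.
Then `c - √h - 2√h/F² = √h (a - 2/F²)`, and the instability condition reduces to `2 < a F²`. -/

namespace SaintVenant

lemma sqrt_sq_mul {ν : ℝ} (hν : 0 ≤ ν) (H : ℝ) : Real.sqrt (ν ^ 2 * H) = ν * Real.sqrt H := by
  rw [Real.sqrt_mul (sq_nonneg ν), Real.sqrt_sq hν]

variable {ν H_R c : ℝ}

lemma speed_sub_sqrt_right (hν : 0 < ν) (hc : c = (ν ^ 2 + ν + 1) * Real.sqrt H_R / (ν + 1)) :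
    c - Real.sqrt H_R = Real.sqrt H_R * (ν ^ 2 / (ν + 1)) := by
  rw [hc]
  field_simp
  ring

lemma speed_sub_sqrt_left (hν : 0 < ν) (hc : c = (ν ^ 2 + ν + 1) * Real.sqrt H_R / (ν + 1)) :
    c - Real.sqrt (ν ^ 2 * H_R) = Real.sqrt (ν ^ 2 * H_R) * (1 / (ν * (ν + 1))) := by
  rw [sqrt_sq_mul hν.le, hc]
  field_simp
  ring

end SaintVenant

lemma sub_sub_two_mul_div_sq {c s a : ℝ} (h : c - s = s * a) (F : ℝ) :
    c - s - 2 * s / F ^ 2 = s * (a - 2 / F ^ 2) := by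
  rw [h]
  ring

lemma two_mul_div_sq_lt_mul_iff {s a F : ℝ} (hs : 0 < s) (hF : 0 < F) :
    2 * s / F ^ 2 < s * a ↔ 2 < a * F ^ 2 := by
  rw [div_lt_iff₀ (by positivity), mul_comm s a, mul_assoc, mul_comm s, ← mul_assoc,
    mul_lt_mul_iff_left₀ hs]

open SaintVenant in
theorem absolute_instability_criterion_general (ν H_R H_L c F : ℝ)
    (hν : 1 < ν) (hR : 0 < H_R) (hF : 0 < F)
    (hL : H_L = ν ^ 2 * H_R)
    (hc : c = (ν ^ 2 + ν + 1) * Real.sqrt H_R / (ν + 1)) :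
    c - Real.sqrt H_R - 2 * Real.sqrt H_R / F ^ 2
      = Real.sqrt H_R * (ν ^ 2 / (ν + 1) - 2 / F ^ 2) ∧
    c - Real.sqrt H_L - 2 * Real.sqrt H_L / F ^ 2
      = Real.sqrt H_L * (1 / (ν * (ν + 1)) - 2 / F ^ 2) ∧
    (2 * Real.sqrt H_L / F ^ 2 < c - Real.sqrt H_L ↔ 2 * ν * (ν + 1) < F ^ 2) := by
  have hν₀ : 0 < ν := one_pos.trans hν
  have hleft := speed_sub_sqrt_left hν₀ hc
  rw [← hL] at hleft
  refine ⟨sub_sub_two_mul_div_sq (speed_sub_sqrt_right hν₀ hc) F,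
    sub_sub_two_mul_div_sq hleft F, ?_⟩
  have hsL : 0 < Real.sqrt H_L := Real.sqrt_pos.mpr (hL ▸ by positivity)
  rw [hleft, two_mul_div_sq_lt_mul_iff hsL hF, one_div_mul_eq_div, lt_div_iff₀ (by positivity),
    mul_assoc]

theorem absolute_instability_criterion (ν H_R H_L c q₀ F : ℝ)
    (hν : 1 < ν) (hR : 0 < H_R) (hF : 0 < F)
    (hL : H_L = ν ^ 2 * H_R)
    (hc : c = (ν ^ 2 + ν + 1) * Real.sqrt H_R / (ν + 1))
    (hq : q₀ = ν ^ 2 * H_R ^ ((3 : ℝ) / 2) / (ν + 1)) :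
    c - Real.sqrt H_R - 2 * Real.sqrt H_R / F ^ 2
      = Real.sqrt H_R * (ν ^ 2 / (ν + 1) - 2 / F ^ 2) ∧
    c - Real.sqrt H_L - 2 * Real.sqrt H_L / F ^ 2
      = Real.sqrt H_L * (1 / (ν * (ν + 1)) - 2 / F ^ 2) ∧
    (2 * Real.sqrt H_L / F ^ 2 < c - Real.sqrt H_L ↔ 2 * ν * (ν + 1) < F ^ 2) :=
  absolute_instability_criterion_general ν H_R H_L c F hν hR hF hL hc
end

section
/- For ν > 1, let H_R > 0, H_L = ν²H_R, c = (ν²+ν+1)√(H_R)/(ν+1), q₀ = ν²H_R^{3/2}/(ν+1), and define the cubic Z(h) = h³ − (F²cq₀/2)h + (F²q₀²)/2. Then Z(H_L) > 0 if and only if F < √(2ν(ν+1)). -/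
/-!
Writing `s = √H_R`, every quantity is a monomial in `s`, and the cubic at `H_L = ν² s²` factors as
`Z(H_L) = ν⁵ s⁶ / (2(ν+1)) · (2ν(ν+1) − F²)`. For `ν > 0` the prefactor is positive, so the sign of
`Z(H_L)` is that of `2ν(ν+1) − F²`.
-/

lemma rpow_three_halves_eq_sqrt_pow_three {x : ℝ} (hx : 0 ≤ x) : x ^ ((3 : ℝ) / 2) = √x ^ 3 := by
  rw [Real.rpow_div_two_eq_sqrt 3 hx]
  exact_mod_cast Real.rpow_natCast (√x) 3

lemma cubic_at_left_state_eq (ν s F : ℝ) (hν : ν + 1 ≠ 0) :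
    (ν ^ 2 * s ^ 2) ^ 3
        - F ^ 2 * ((ν ^ 2 + ν + 1) * s / (ν + 1)) * (ν ^ 2 * s ^ 3 / (ν + 1)) / 2 * (ν ^ 2 * s ^ 2)
        + F ^ 2 * (ν ^ 2 * s ^ 3 / (ν + 1)) ^ 2 / 2
      = ν ^ 5 * s ^ 6 / (2 * (ν + 1)) * (2 * ν * (ν + 1) - F ^ 2) := by
  field_simp
  ring

lemma mul_sub_sq_pos_iff_lt_sqrt {a b F : ℝ} (ha : 0 < a) (hF : 0 ≤ F) :
    0 < a * (b - F ^ 2) ↔ F < √b := by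
  rw [mul_pos_iff_of_pos_left ha, sub_pos, Real.lt_sqrt hF]

theorem cubic_positive_iff (ν H_R H_L c q₀ F : ℝ) (Z : ℝ → ℝ)
    (hν : 1 < ν) (hR : 0 < H_R) (hF : 0 < F)
    (hL : H_L = ν ^ 2 * H_R)
    (hc : c = (ν ^ 2 + ν + 1) * Real.sqrt H_R / (ν + 1))
    (hq : q₀ = ν ^ 2 * H_R ^ ((3 : ℝ) / 2) / (ν + 1))
    (hZ : ∀ h, Z h = h ^ 3 - F ^ 2 * c * q₀ / 2 * h + F ^ 2 * q₀ ^ 2 / 2) :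
    0 < Z H_L ↔ F < Real.sqrt (2 * ν * (ν + 1)) := by
  obtain ⟨s, hs, rfl⟩ : ∃ s > 0, H_R = s ^ 2 :=
    ⟨√H_R, Real.sqrt_pos.2 hR, (Real.sq_sqrt hR.le).symm⟩
  have hν₀ : 0 < ν := by linarith
  have hZL : Z H_L = ν ^ 5 * s ^ 6 / (2 * (ν + 1)) * (2 * ν * (ν + 1) - F ^ 2) := by
    rw [hZ, hL, hc, hq, rpow_three_halves_eq_sqrt_pow_three hR.le, Real.sqrt_sq hs.le]
    exact cubic_at_left_state_eq ν s F (by positivity)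
  rw [hZL]
  exact mul_sub_sq_pos_iff_lt_sqrt (by positivity) hF.le
end

section
/- Let H > 0 be a C¹ function, c, q₀ real with Q := cH − q₀, F > 0, a := H/F² − (c − Q/H)², and define f₂ := −(1 − 2(c − Q/H)·Q/H² − a′)/a. If H satisfies the profile ODE a·H′ = (H³ − (cH − q₀)²)/H² on an interval where a ≠ 0 and H′ ≠ 0, then H″ = −f₂·H′ on that interval. -/
/-!
Where `a ≠ 0` the profile equation reads `H' = g(H) / a` with `g(h) = (h³ - (c h - q₀)²) / h²`,
so the quotient rule and `g(H) = a H'` give `H'' = H' (g'(H) - a') / a`. The derivative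
`g'(h) = 1 - 2 (c - Q/h) Q/h²` is exactly the numerator of `-f₂`.
-/

open Filter Topology

theorem deriv_deriv_of_mul_deriv_eventuallyEq {f a g : ℝ → ℝ} {x : ℝ}
    (hf : DifferentiableAt ℝ f x) (ha : DifferentiableAt ℝ a x)
    (hg : DifferentiableAt ℝ g (f x)) (hax : a x ≠ 0)
    (hode : ∀ᶠ y in 𝓝 x, a y * deriv f y = g (f y)) :
    deriv (deriv f) x = deriv f x * (deriv g (f x) - deriv a x) / a x := by
  have hderiv : deriv f =ᶠ[𝓝 x] fun y => g (f y) / a y := by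
    filter_upwards [hode, ha.continuousAt.eventually_ne hax] with y hy hay
    rw [← hy, mul_div_cancel_left₀ _ hay]
  have hquot : HasDerivAt (fun y => g (f y) / a y) _ x :=
    (hg.hasDerivAt.comp x hf.hasDerivAt).div ha.hasDerivAt hax
  rw [hderiv.deriv_eq, hquot.deriv, Function.comp_apply, ← hode.self_of_nhds]
  field_simp

theorem hasDerivAt_profile_rhs (c q₀ : ℝ) {h : ℝ} (hh : h ≠ 0) :
    HasDerivAt (fun h => (h ^ 3 - (c * h - q₀) ^ 2) / h ^ 2)
      (1 - 2 * (c - (c * h - q₀) / h) * ((c * h - q₀) / h ^ 2)) h := by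
  have hnum := ((hasDerivAt_pow 3 h).fun_sub
    ((((hasDerivAt_id' h).const_mul c).sub_const q₀).fun_pow 2))
  refine (hnum.fun_div (hasDerivAt_pow 2 h) (pow_ne_zero 2 hh)).congr_deriv ?_
  field_simp
  ring

theorem second_derivative_identity_general (H : ℝ → ℝ) (c q₀ F x₁ x₂ : ℝ)
    (hH : ContDiff ℝ 1 H) (hpos : ∀ x, 0 < H x)
    (Q a f₂ : ℝ → ℝ)
    (hQ : ∀ x, Q x = c * H x - q₀)
    (ha : ∀ x, a x = H x / F ^ 2 - (c - Q x / H x) ^ 2)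
    (hf₂ : ∀ x, f₂ x =
      -(1 - 2 * (c - Q x / H x) * (Q x / H x ^ 2) - deriv a x) / a x)
    (hODE : ∀ x ∈ Set.Ioo x₁ x₂,
      a x * deriv H x = ((H x) ^ 3 - (c * H x - q₀) ^ 2) / (H x) ^ 2)
    (hane : ∀ x ∈ Set.Ioo x₁ x₂, a x ≠ 0) :
    ∀ x ∈ Set.Ioo x₁ x₂, deriv (deriv H) x = -f₂ x * deriv H x := by
  intro x hx
  obtain rfl : Q = fun y => c * H y - q₀ := funext hQ
  obtain rfl : a = fun y => H y / F ^ 2 - (c - (c * H y - q₀) / H y) ^ 2 := funext ha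
  have hHx : H x ≠ 0 := (hpos x).ne'
  have hHd : DifferentiableAt ℝ H x := hH.differentiable one_ne_zero x
  have had : DifferentiableAt ℝ (fun y => H y / F ^ 2 - (c - (c * H y - q₀) / H y) ^ 2) x := by
    fun_prop (disch := exact hHx)
  have hrhs := hasDerivAt_profile_rhs c q₀ hHx
  have hode : ∀ᶠ y in 𝓝 x, _ := eventually_of_mem (isOpen_Ioo.mem_nhds hx) hODE
  rw [deriv_deriv_of_mul_deriv_eventuallyEq hHd had hrhs.differentiableAt (hane x hx) hode,
    hrhs.deriv, hf₂]
  ring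

theorem second_derivative_identity (H : ℝ → ℝ) (c q₀ F x₁ x₂ : ℝ)
    (hF : 0 < F) (hH : ContDiff ℝ 1 H) (hpos : ∀ x, 0 < H x)
    (Q a f₂ : ℝ → ℝ)
    (hQ : ∀ x, Q x = c * H x - q₀)
    (ha : ∀ x, a x = H x / F ^ 2 - (c - Q x / H x) ^ 2)
    (hf₂ : ∀ x, f₂ x =
      -(1 - 2 * (c - Q x / H x) * (Q x / H x ^ 2) - deriv a x) / a x)
    (hODE : ∀ x ∈ Set.Ioo x₁ x₂,
      a x * deriv H x = ((H x) ^ 3 - (c * H x - q₀) ^ 2) / (H x) ^ 2)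
    (hane : ∀ x ∈ Set.Ioo x₁ x₂, a x ≠ 0)
    (hH'ne : ∀ x ∈ Set.Ioo x₁ x₂, deriv H x ≠ 0) :
    ∀ x ∈ Set.Ioo x₁ x₂, deriv (deriv H) x = -f₂ x * deriv H x :=
  second_derivative_identity_general H c q₀ F x₁ x₂ hH hpos Q a f₂ hQ ha hf₂ hODE hane
end
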